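/- arXiv:2408.09214 — 2 statements merged into one kernel-verified Lean document; each statement's English description precedes it below -/
import Mathlib

section
/- Let p and q be distinct primes with p odd and p < q. Then the number of cyclic subgroups of the group T_{4q²} × C_p of order 4q²p equals 2(q² + 6); equivalently, it equals 4q²p − t where t = 2q²(2p − 1) − 12. -/
open Subgroup QuaternionGroup
set_option linter.unusedSectionVars false
set_option maxHeartbeats 1000000


section Cyclic
variable {G : Type*} [Group G]

instance zpowersIsCyclic (g : G) : IsCyclic (zpowers g) := by
  refine ⟨⟨g, mem_zpowers g⟩, ?_⟩
  rintro ⟨x, hx⟩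
  obtain ⟨k, rfl⟩ := hx
  exact ⟨k, by ext; simp⟩

lemma subgroup_eq_of_card_eq [Finite G] [IsCyclic G] {H K : Subgroup G}
    (h : Nat.card H = Nat.card K) : H = K := by
  classical
  cases nonempty_fintype G
  have key : ∀ (J : Subgroup G), (J : Set G).toFinset =
      Finset.filter (fun x => x ^ (Nat.card J) = 1) Finset.univ := by
    intro J
    apply Finset.eq_of_subset_of_card_le
    · intro x hx
      rw [Set.mem_toFinset] at hx
      simp only [Finset.mem_filter, Finset.mem_univ, true_and]
      have h2 : ((⟨x, hx⟩ : J) ^ Nat.card ↥J : J) = (1 : J) := pow_card_eq_one'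
      have h3 := congrArg (fun y : ↥J => (y : G)) h2
      simp only [SubgroupClass.coe_pow, OneMemClass.coe_one] at h3
      exact h3
    · calc (Finset.filter (fun x => x ^ (Nat.card J) = 1) Finset.univ).card
          ≤ Nat.card J := IsCyclic.card_pow_eq_one_le Nat.card_pos
        _ = (J : Set G).toFinset.card := by
            rw [Set.toFinset_card, ← Nat.card_eq_fintype_card]; rfl
  have : (H : Set G).toFinset = (K : Set G).toFinset := by rw [key, key, h]
  ext x
  constructor <;> intro hx <;>
    [ (have := this ▸ Set.mem_toFinset.mpr hx; exact Set.mem_toFinset.mp this);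
      (have := this ▸ Set.mem_toFinset.mpr hx; exact Set.mem_toFinset.mp this)]

lemma exists_subgroup_card_eq [Finite G] [IsCyclic G] {d : ℕ} (hd : d ∣ Nat.card G) :
    ∃ H : Subgroup G, Nat.card H = d := by
  obtain ⟨g, hg⟩ := IsCyclic.exists_ofOrder_eq_natCard (α := G)
  refine ⟨zpowers (g ^ (Nat.card G / d)), ?_⟩
  rw [Nat.card_zpowers, orderOf_pow, hg,
    Nat.gcd_eq_right (Nat.div_dvd_of_dvd hd), Nat.div_div_self hd Nat.card_pos.ne']

lemma card_subgroup_cyclic (G : Type*) [Group G] [Finite G] [IsCyclic G] :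
    Nat.card (Subgroup G) = (Nat.card G).divisors.card := by
  rw [← Nat.card_eq_finsetCard]
  refine Nat.card_eq_of_bijective
    (fun H : Subgroup G => (⟨Nat.card H, Nat.mem_divisors.mpr
      ⟨card_subgroup_dvd_card H, Nat.card_pos.ne'⟩⟩ : {x // x ∈ (Nat.card G).divisors})) ⟨?_, ?_⟩
  · intro H K h
    exact subgroup_eq_of_card_eq (by simpa using congrArg Subtype.val h)
  · rintro ⟨d, hd⟩
    obtain ⟨H, hH⟩ := exists_subgroup_card_eq (Nat.mem_divisors.mp hd).1
    exact ⟨H, by simp [hH]⟩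
end Cyclic


section Prod
variable {A B : Type*} [Group A] [Group B] [Finite A] [Finite B]

lemma mem_left_one (hco : (Nat.card A).Coprime (Nat.card B)) {H : Subgroup (A × B)}
    {x : A} {y : B} (h : (x, y) ∈ H) : ((x, (1 : B)) ∈ H) ∧ (((1 : A), y) ∈ H) := by
  obtain ⟨k, hk1, hk2⟩ := Nat.chineseRemainder hco 0 1
  have horder : orderOf x ∣ k := by
    exact dvd_trans (orderOf_dvd_natCard x) (Nat.modEq_zero_iff_dvd.mp hk1)
  have hx : x ^ k = 1 := orderOf_dvd_iff_pow_eq_one.mp horder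
  have hy : y ^ k = y := by
    rw [show y = y ^ 1 from (pow_one y).symm, ← pow_mul, one_mul, pow_eq_pow_iff_modEq]
    exact hk2.of_dvd (orderOf_dvd_natCard y)
  have h2 : ((1 : A), y) ∈ H := by
    have := H.pow_mem h k
    rwa [Prod.pow_mk, hx, hy] at this
  refine ⟨?_, h2⟩
  have := H.mul_mem h (H.inv_mem h2)
  simpa using this

lemma prod_decomp (hco : (Nat.card A).Coprime (Nat.card B)) (H : Subgroup (A × B)) :
    (H.map (MonoidHom.fst A B)).prod (H.map (MonoidHom.snd A B)) = H := by
  apply le_antisymm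
  · rintro ⟨x, y⟩ ⟨hx, hy⟩
    simp only [mem_map] at hx hy
    obtain ⟨⟨x', b⟩, hxb, hx'⟩ := hx
    obtain ⟨⟨c, y'⟩, hcy, hy'⟩ := hy
    simp only [MonoidHom.coe_fst, MonoidHom.coe_snd] at hx' hy'
    subst hx' hy'
    have h1 := (mem_left_one hco hxb).1
    have h2 := (mem_left_one hco hcy).2
    have := H.mul_mem h1 h2
    simpa using this
  · rintro ⟨x, y⟩ h
    exact ⟨⟨(x, y), h, rfl⟩, ⟨(x, y), h, rfl⟩⟩

lemma map_fst_prod' (H₁ : Subgroup A) (H₂ : Subgroup B) :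
    (H₁.prod H₂).map (MonoidHom.fst A B) = H₁ := by
  ext x
  simp only [mem_map, mem_prod, MonoidHom.coe_fst]
  exact ⟨fun ⟨⟨a', b'⟩, ⟨ha, _⟩, he⟩ => he ▸ ha, fun hx => ⟨(x, 1), ⟨hx, one_mem _⟩, rfl⟩⟩

lemma map_snd_prod' (H₁ : Subgroup A) (H₂ : Subgroup B) :
    (H₁.prod H₂).map (MonoidHom.snd A B) = H₂ := by
  ext y
  simp only [mem_map, mem_prod, MonoidHom.coe_snd]
  exact ⟨fun ⟨⟨a', b'⟩, ⟨_, hb⟩, he⟩ => he ▸ hb, fun hy => ⟨(1, y), ⟨one_mem _, hy⟩, rfl⟩⟩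

lemma isCyclic_prod_of_coprime {α β : Type*} [Group α] [Group β] [Finite α] [Finite β]
    [IsCyclic α] [IsCyclic β] (h : (Nat.card α).Coprime (Nat.card β)) : IsCyclic (α × β) := by
  obtain ⟨g, hg⟩ := IsCyclic.exists_ofOrder_eq_natCard (α := α)
  obtain ⟨g', hg'⟩ := IsCyclic.exists_ofOrder_eq_natCard (α := β)
  apply isCyclic_of_orderOf_eq_card (g, g')
  rw [Prod.orderOf, Nat.card_prod]
  simp only [hg, hg']
  exact h.lcm_eq_mul

noncomputable def cyclicSubgroupProdEquiv (hco : (Nat.card A).Coprime (Nat.card B)) :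
    {H : Subgroup (A × B) // IsCyclic H} ≃
      {H : Subgroup A // IsCyclic H} × {H : Subgroup B // IsCyclic H} where
  toFun H :=
    ⟨⟨H.1.map (MonoidHom.fst A B),
      have := H.2
      isCyclic_of_surjective _ ((MonoidHom.fst A B).subgroupMap_surjective H.1)⟩,
     ⟨H.1.map (MonoidHom.snd A B),
      have := H.2
      isCyclic_of_surjective _ ((MonoidHom.snd A B).subgroupMap_surjective H.1)⟩⟩
  invFun P :=
    ⟨P.1.1.prod P.2.1, by
      have h1 := P.1.2
      have h2 := P.2.2
      have hco' : (Nat.card P.1.1).Coprime (Nat.card P.2.1) :=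
        Nat.Coprime.coprime_dvd_right (card_subgroup_dvd_card _)
          (Nat.Coprime.coprime_dvd_left (card_subgroup_dvd_card _) hco)
      have := isCyclic_prod_of_coprime (α := P.1.1) (β := P.2.1) hco'
      exact isCyclic_of_surjective _ (P.1.1.prodEquiv P.2.1).symm.surjective⟩
  left_inv H := Subtype.ext (prod_decomp hco H.1)
  right_inv P := by
    ext : 1
    · exact Subtype.ext (map_fst_prod' P.1.1 P.2.1)
    · exact Subtype.ext (map_snd_prod' P.1.1 P.2.1)

end Prod

section QuatCount
variable {n : ℕ} [NeZero n]



lemma qa_inv (i : ZMod (2 * n)) : (a i : QuaternionGroup n)⁻¹ = a (-i) := by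
  rw [eq_comm, eq_inv_iff_mul_eq_one, a_mul_a, neg_add_cancel, one_def]

lemma neg_n_eq : -((n : ZMod (2 * n))) = ((n : ZMod (2 * n))) := by
  have h : ((2 * n : ℕ) : ZMod (2 * n)) = 0 := ZMod.natCast_self _
  push_cast at h
  linear_combination -h

lemma qxa_inv (i : ZMod (2 * n)) :
    (xa i : QuaternionGroup n)⁻¹ = xa (i + (n : ZMod (2 * n))) := by
  rw [eq_comm, eq_inv_iff_mul_eq_one, xa_mul_xa]
  have h : ((n : ZMod (2*n))) + i - (i + (n : ZMod (2*n))) = 0 := by ring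
  rw [h, ← one_def]

lemma mem_zpowers_a_one (i : ZMod (2 * n)) : (a i : QuaternionGroup n) ∈ zpowers (a 1) := by
  refine mem_zpowers_iff.mpr ⟨(i.val : ℤ), ?_⟩
  rw [zpow_natCast, a_one_pow, ZMod.natCast_zmod_val]

lemma eq_a_of_mem_zpowers {x : QuaternionGroup n} (hx : x ∈ zpowers (a 1)) :
    ∃ j, x = a j := by
  obtain ⟨k, rfl⟩ := mem_zpowers_iff.mp hx
  obtain ⟨m, rfl | rfl⟩ := Int.eq_nat_or_neg k
  · exact ⟨m, by rw [zpow_natCast, a_one_pow]⟩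
  · exact ⟨-(m : ZMod (2*n)), by rw [zpow_neg, zpow_natCast, a_one_pow, qa_inv]⟩

lemma xa_not_mem_zpowers (i : ZMod (2 * n)) :
    (xa i : QuaternionGroup n) ∉ zpowers (a 1) := fun h => by
  obtain ⟨j, hj⟩ := eq_a_of_mem_zpowers h
  cases hj

lemma xa_pow_three (i : ZMod (2 * n)) :
    (xa i : QuaternionGroup n) ^ 3 = xa (i + (n : ZMod (2*n))) := by
  rw [pow_succ, xa_sq, a_mul_xa, sub_eq_add_neg, neg_n_eq]

lemma mem_zpowers_xa {x : QuaternionGroup n} {i : ZMod (2 * n)}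
    (hx : x ∈ zpowers (xa i)) :
    x = 1 ∨ x = xa i ∨ x = a (n : ZMod (2*n)) ∨ x = xa (i + (n : ZMod (2*n))) := by
  obtain ⟨k, rfl⟩ := mem_zpowers_iff.mp hx
  have h4 : orderOf (xa i : QuaternionGroup n) = 4 := orderOf_xa i
  have hmod : (xa i : QuaternionGroup n) ^ k = (xa i) ^ (k % 4).toNat := by
    rw [← zpow_natCast, Int.toNat_of_nonneg (Int.emod_nonneg _ (by norm_num)),
      show (4 : ℤ) = ((orderOf (xa i : QuaternionGroup n) : ℤ)) by rw [h4]; norm_num,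
      zpow_mod_orderOf]
  rw [hmod]
  have hlt : (k % 4).toNat < 4 := by omega
  interval_cases h : (k % 4).toNat
  · left; exact pow_zero _
  · right; left; exact pow_one _
  · right; right; left; exact xa_sq i
  · right; right; right; exact xa_pow_three i

lemma zpowers_xa_add_n (i : ZMod (2 * n)) :
    zpowers (xa (i + (n : ZMod (2*n))) : QuaternionGroup n) = zpowers (xa i) := by
  rw [← qxa_inv, zpowers_inv]

lemma eq_zpowers_of_generator {G : Type*} [Group G] {H : Subgroup G} {g : G} (hg : g ∈ H)
    (h : ∀ x : H, x ∈ zpowers (⟨g, hg⟩ : H)) : H = zpowers g := by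
  apply le_antisymm
  · intro x hx
    obtain ⟨k, hk⟩ := mem_zpowers_iff.mp (h ⟨x, hx⟩)
    exact mem_zpowers_iff.mpr ⟨k, by simpa using congrArg Subtype.val hk⟩
  · exact (zpowers_le).mpr hg



noncomputable def quatCyclicMap (n : ℕ) [NeZero n] :
    (Subgroup ↥(zpowers (a 1 : QuaternionGroup n))) ⊕ ZMod n →
      {H : Subgroup (QuaternionGroup n) // IsCyclic H}
  | Sum.inl K => ⟨K.map (zpowers (a 1 : QuaternionGroup n)).subtype,
      isCyclic_of_surjective _
        (((zpowers (a 1 : QuaternionGroup n)).subtype).subgroupMap_surjective K)⟩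
  | Sum.inr j => ⟨zpowers (xa ((j.val : ZMod (2*n))) : QuaternionGroup n), zpowersIsCyclic _⟩

lemma quatCyclicMap_bijective (n : ℕ) [NeZero n] : Function.Bijective (quatCyclicMap n) := by
  constructor
  · have hmaps : ∀ (K : Subgroup ↥(zpowers (a 1 : QuaternionGroup n))),
        K.map (zpowers (a 1 : QuaternionGroup n)).subtype ≤ zpowers (a 1 : QuaternionGroup n) :=
      fun K => map_subtype_le K
    rintro (K | j) (K' | j') h <;>
      simp only [quatCyclicMap, Subtype.mk.injEq] at h
    · exact congrArg Sum.inl (Subgroup.map_injective (subtype_injective _) h)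
    · exfalso
      exact xa_not_mem_zpowers _ (hmaps K (h ▸ mem_zpowers _))
    · exfalso
      exact xa_not_mem_zpowers _ (hmaps K' (h.symm ▸ mem_zpowers _))
    · congr 1
      have hmem : (xa ((j'.val : ZMod (2*n))) : QuaternionGroup n) ∈
          zpowers (xa ((j.val : ZMod (2*n))) : QuaternionGroup n) := h ▸ mem_zpowers _
      have φeq : ∀ m : ZMod n,
          ZMod.castHom (dvd_mul_left n 2) (ZMod n) ((m.val : ZMod (2*n))) = m := by
        intro m
        rw [map_natCast, ZMod.natCast_zmod_val]
      rcases mem_zpowers_xa hmem with h1 | h1 | h1 | h1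
      · exact absurd h1 (by rw [one_def]; intro h; cases h)
      · have h2 := congrArg (ZMod.castHom (dvd_mul_left n 2) (ZMod n)) (xa.inj h1)
        rw [φeq, φeq] at h2
        exact h2.symm
      · exact absurd h1 (by simp)
      · have h2 := congrArg (ZMod.castHom (dvd_mul_left n 2) (ZMod n)) (xa.inj h1)
        rw [map_add, φeq, φeq, map_natCast, ZMod.natCast_self, add_zero] at h2
        exact h2.symm
  · rintro ⟨H, hcyc⟩
    obtain ⟨⟨g, hg⟩, hgen⟩ := hcyc.exists_generator
    have hH : H = zpowers g := eq_zpowers_of_generator hg hgen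
    cases g with
    | a i =>
        have hle : H ≤ zpowers (a 1 : QuaternionGroup n) := by
          rw [hH]; exact zpowers_le.mpr (mem_zpowers_a_one i)
        refine ⟨Sum.inl (H.subgroupOf (zpowers (a 1 : QuaternionGroup n))), ?_⟩
        simp only [quatCyclicMap]
        refine Subtype.ext ?_
        show (H.subgroupOf (zpowers (a 1 : QuaternionGroup n))).map
          (zpowers (a 1 : QuaternionGroup n)).subtype = H
        rw [subgroupOf_map_subtype, inf_eq_left.mpr hle]
    | xa i =>
        set j := ZMod.castHom (dvd_mul_left n 2) (ZMod n) i with hj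
        refine ⟨Sum.inr j, ?_⟩
        simp only [quatCyclicMap]
        refine Subtype.ext ?_
        show zpowers (xa ((j.val : ZMod (2*n))) : QuaternionGroup n) = H
        have hval : i.val = j.val ∨ i.val = j.val + n := by
          have h1 : j = ((i.val : ℕ) : ZMod n) := by
            rw [hj, ← ZMod.natCast_zmod_val i, map_natCast, ZMod.natCast_zmod_val]
          have h2 : j.val = i.val % n := by rw [h1, ZMod.val_natCast]
          have h3 := Nat.mod_add_div i.val n
          have h4 : i.val / n < 2 := by
            rw [Nat.div_lt_iff_lt_mul (Nat.pos_of_ne_zero (NeZero.ne n))]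
            have := ZMod.val_lt i
            omega
          interval_cases h5 : i.val / n <;> omega
        have hi : i = ((j.val : ZMod (2*n))) ∨
            i = ((j.val : ZMod (2*n))) + (n : ZMod (2*n)) := by
          rcases hval with h | h
          · left; rw [← ZMod.natCast_zmod_val i, h]
          · right; rw [← ZMod.natCast_zmod_val i, h]; push_cast; ring
        rcases hi with h | h
        · rw [hH, h]
        · rw [hH, h, zpowers_xa_add_n]
end QuatCount

lemma card_cyclic_quat (n : ℕ) [NeZero n] :
    Nat.card {H : Subgroup (QuaternionGroup n) // IsCyclic H} = (2*n).divisors.card + n := by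
  rw [← Nat.card_eq_of_bijective _ (quatCyclicMap_bijective n), Nat.card_sum,
    card_subgroup_cyclic, Nat.card_zpowers, orderOf_a_one, Nat.card_zmod]

lemma card_cyclic_zmod (p : ℕ) (hp : p.Prime) :
    Nat.card {H : Subgroup (Multiplicative (ZMod p)) // IsCyclic H} = 2 := by
  haveI : NeZero p := ⟨hp.pos.ne'⟩
  have e : {H : Subgroup (Multiplicative (ZMod p)) // IsCyclic H} ≃
      Subgroup (Multiplicative (ZMod p)) := Equiv.subtypeUnivEquiv fun H => inferInstance
  rw [Nat.card_congr e, card_subgroup_cyclic,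
    Nat.card_congr (Multiplicative.toAdd (α := ZMod p)), Nat.card_zmod, hp.divisors,
    Finset.card_pair hp.one_lt.ne]

/-- For distinct primes `p < q` with `p` odd, the number of cyclic subgroups of
`T_{4q²} × C_p` equals `2(q² + 6) = 4q²p − (2q²(2p − 1) − 12)`. -/
theorem num_cyclic_subgroups_dicyclic_q_sq_prod_cyclic (p q : ℕ) (hp : p.Prime)
    (hq : q.Prime) (hodd : Odd p) (hpq : p < q) :
    Nat.card {H : Subgroup (QuaternionGroup (q ^ 2) × Multiplicative (ZMod p)) // IsCyclic H} =
      2 * (q ^ 2 + 6) ∧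
    Nat.card {H : Subgroup (QuaternionGroup (q ^ 2) × Multiplicative (ZMod p)) // IsCyclic H} =
      4 * q ^ 2 * p - (2 * q ^ 2 * (2 * p - 1) - 12) := by
  haveI : NeZero (q ^ 2) := ⟨pow_ne_zero 2 hq.pos.ne'⟩
  haveI : NeZero p := ⟨hp.pos.ne'⟩
  have hp2 : p ≠ 2 := by rintro rfl; exact (Nat.not_odd_iff_even.mpr even_two) hodd
  have hp3 : 3 ≤ p := by rcases hp.two_le.lt_or_eq with h | h; omega; omega
  have hq2 : q ≠ 2 := by omega
  have hcoq : Nat.Coprime p (q ^ 2) :=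
    ((Nat.coprime_primes hp hq).mpr hpq.ne).pow_right 2
  have hco4 : Nat.Coprime p 4 := by
    have : Nat.Coprime p 2 := (Nat.coprime_primes hp Nat.prime_two).mpr hp2
    have := this.pow_right 2
    norm_num at this
    exact this
  have hco : (Nat.card (QuaternionGroup (q ^ 2))).Coprime
      (Nat.card (Multiplicative (ZMod p))) := by
    have h1 : Nat.card (QuaternionGroup (q ^ 2)) = 4 * q ^ 2 := by
      rw [Nat.card_eq_fintype_card, QuaternionGroup.card]
    have h2 : Nat.card (Multiplicative (ZMod p)) = p :=
      (Nat.card_congr (Multiplicative.toAdd (α := ZMod p))).trans (Nat.card_zmod p)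
    rw [h1, h2]
    exact (hco4.mul_right hcoq).symm
  have hdiv : (2 * q ^ 2).divisors.card = 6 := by
    have hc2 : Nat.Coprime 2 (q ^ 2) :=
      ((Nat.coprime_primes Nat.prime_two hq).mpr (Ne.symm hq2)).pow_right 2
    rw [hc2.card_divisors_mul, Nat.divisors_prime_pow hq 2, Nat.prime_two.divisors]
    simp

  have key : Nat.card
      {H : Subgroup (QuaternionGroup (q ^ 2) × Multiplicative (ZMod p)) // IsCyclic H} =
      2 * (q ^ 2 + 6) := by
    rw [Nat.card_congr (cyclicSubgroupProdEquiv hco), Nat.card_prod,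
      card_cyclic_quat (q ^ 2), card_cyclic_zmod p hp, hdiv]
    ring
  refine ⟨key, key.trans ?_⟩
  have hmul : 2 * q ^ 2 * (2 * p - 1) = 4 * (q ^ 2 * p) - 2 * q ^ 2 := by
    rw [Nat.mul_sub]; ring_nf
  rw [hmul, show 4 * q ^ 2 * p = 4 * (q ^ 2 * p) by ring]
  have hqq : 4 ≤ q ^ 2 := by nlinarith [hp.two_le, hpq]
  have hge : 3 * q ^ 2 ≤ q ^ 2 * p := by nlinarith
  omega
end

section
/- Let p and q be distinct primes with p odd and p < q, and let r ≥ 1. Then the number of cyclic subgroups of the group T_{4q^r} × C_p of order 4q^r·p equals 2(q^r + 2(r + 1)); equivalently, it equals 4q^r·p − t where t = 2q^r(2p − 1) − 4(r + 1). -/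
open Subgroup QuaternionGroup

section Helpers

lemma auxq_isCyclic_zpowers {G : Type*} [Group G] (g : G) : IsCyclic (Subgroup.zpowers g) := by
  refine ⟨⟨⟨g, Subgroup.mem_zpowers g⟩, ?_⟩⟩
  rintro ⟨x, hx⟩
  obtain ⟨k, hk⟩ := Subgroup.mem_zpowers_iff.mp hx
  exact ⟨k, Subtype.ext (by simpa using hk)⟩

lemma aux_exists_zpowers' {G : Type*} [Group G] {H : Subgroup G} (h : IsCyclic H) :
    ∃ g : G, H = Subgroup.zpowers g := by
  obtain ⟨⟨g, hg⟩, hgen⟩ := h.exists_generator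
  refine ⟨g, le_antisymm ?_ ((Subgroup.zpowers_le).mpr hg)⟩
  intro x hx
  obtain ⟨k, hk⟩ := Subgroup.mem_zpowers_iff.mp (hgen ⟨x, hx⟩)
  exact Subgroup.mem_zpowers_iff.mpr ⟨k, by simpa using congrArg Subtype.val hk⟩

lemma aux_card_subgroup {G : Type*} [Group G] [Finite G] [IsCyclic G] :
    Nat.card (Subgroup G) = (Nat.card G).divisors.card := by
  classical
  obtain ⟨g, hg⟩ := IsCyclic.exists_generator (α := G)
  have hord : orderOf g = Nat.card G := orderOf_eq_card_of_forall_mem_zpowers hg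
  have hn0 : Nat.card G ≠ 0 := Nat.card_pos.ne'
  have key : ∀ H : Subgroup G, H = Subgroup.zpowers (g ^ (Nat.card G / Nat.card H)) := by
    intro H
    set d := Nat.card H with hd
    have hdvd : d ∣ Nat.card G := Subgroup.card_subgroup_dvd_card H
    have hd0 : d ≠ 0 := Nat.card_pos.ne'
    have hdvd' : Nat.card G / d ∣ Nat.card G := Nat.div_dvd_of_dvd hdvd
    have hordp : orderOf (g ^ (Nat.card G / d)) = d := by
      rw [orderOf_pow, hord, Nat.gcd_eq_right hdvd', Nat.div_div_self hdvd hn0]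
    have hcardZ : Nat.card (Subgroup.zpowers (g ^ (Nat.card G / d))) = d := by
      rw [Nat.card_zpowers, hordp]
    refine Subgroup.eq_of_le_of_card_ge ?_ (by rw [hcardZ])
    intro x hx
    have hxz : x ∈ Submonoid.powers g := mem_powers_iff_mem_zpowers.mpr (hg x)
    obtain ⟨k, rfl⟩ := hxz
    have hxd : (g ^ k) ^ d = 1 := by
      have : (⟨g ^ k, hx⟩ : H) ^ d = 1 := pow_card_eq_one'
      simpa using congrArg Subtype.val this
    rw [← pow_mul] at hxd
    have hdk : Nat.card G ∣ k * d := hord ▸ orderOf_dvd_of_pow_eq_one hxd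
    have : Nat.card G / d ∣ k := by
      obtain ⟨m, hm⟩ := hdk
      refine ⟨m, ?_⟩
      apply Nat.eq_of_mul_eq_mul_right (Nat.pos_of_ne_zero hd0)
      calc k * d = Nat.card G * m := hm
        _ = Nat.card G / d * m * d := by rw [mul_right_comm, Nat.div_mul_cancel hdvd]
    obtain ⟨t, rfl⟩ := this
    show g ^ (Nat.card G / d * t) ∈ _
    rw [pow_mul]
    exact Subgroup.pow_mem _ (Subgroup.mem_zpowers _) t
  have hbij : Function.Bijective (fun H : Subgroup G => (⟨Nat.card H,
      Nat.mem_divisors.mpr ⟨Subgroup.card_subgroup_dvd_card H, hn0⟩⟩ :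
        {d // d ∈ (Nat.card G).divisors})) := by
    constructor
    · intro H K h
      have h' : Nat.card H = Nat.card K := congrArg Subtype.val h
      rw [key H, key K, h']
    · rintro ⟨d, hd⟩
      rw [Nat.mem_divisors] at hd
      refine ⟨Subgroup.zpowers (g ^ (Nat.card G / d)), ?_⟩
      have hdvd' : Nat.card G / d ∣ Nat.card G := Nat.div_dvd_of_dvd hd.1
      have : Nat.card (Subgroup.zpowers (g ^ (Nat.card G / d))) = d := by
        rw [Nat.card_zpowers, orderOf_pow, hord, Nat.gcd_eq_right hdvd',
          Nat.div_div_self hd.1 hn0]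
      exact Subtype.ext this
  calc Nat.card (Subgroup G) = Nat.card {d // d ∈ (Nat.card G).divisors} :=
        Nat.card_congr (Equiv.ofBijective _ hbij)
    _ = (Nat.card G).divisors.card := by
        rw [Nat.card_eq_fintype_card, Fintype.card_coe]

end Helpers

section ProdLemma

variable {G₁ G₂ : Type*} [Group G₁] [Group G₂] [Finite G₁] [Finite G₂]

omit [Finite G₁] [Finite G₂] in
lemma aux_zpowers_prod {g₁ : G₁} {g₂ : G₂} (hco : (orderOf g₁).Coprime (orderOf g₂)) :
    Subgroup.zpowers ((g₁, g₂) : G₁ × G₂) = (Subgroup.zpowers g₁).prod (Subgroup.zpowers g₂) := by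
  refine le_antisymm (Subgroup.zpowers_le.mpr (Subgroup.mem_prod.mpr
    ⟨Subgroup.mem_zpowers _, Subgroup.mem_zpowers _⟩)) ?_
  have h1 : ((g₁, 1) : G₁ × G₂) ∈ Subgroup.zpowers ((g₁, g₂) : G₁ × G₂) := by
    obtain ⟨s, hs1, hs2⟩ := Nat.chineseRemainder hco 1 0
    refine Subgroup.mem_zpowers_iff.mpr ⟨(s : ℤ), ?_⟩
    rw [zpow_natCast, Prod.pow_mk, Prod.mk.injEq]
    constructor
    · rw [show g₁ = g₁ ^ 1 by rw [pow_one]]; rw [← pow_mul]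
      simp only [one_mul, mul_one]
      exact pow_eq_pow_iff_modEq.mpr hs1
    · rw [show (1 : G₂) = g₂ ^ 0 by rw [pow_zero]]
      exact pow_eq_pow_iff_modEq.mpr hs2
  have h2 : ((1, g₂) : G₁ × G₂) ∈ Subgroup.zpowers ((g₁, g₂) : G₁ × G₂) := by
    obtain ⟨s, hs1, hs2⟩ := Nat.chineseRemainder hco 0 1
    refine Subgroup.mem_zpowers_iff.mpr ⟨(s : ℤ), ?_⟩
    rw [zpow_natCast, Prod.pow_mk, Prod.mk.injEq]
    constructor
    · rw [show (1 : G₁) = g₁ ^ 0 by rw [pow_zero]]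
      exact pow_eq_pow_iff_modEq.mpr hs1
    · rw [show g₂ = g₂ ^ 1 by rw [pow_one]]; rw [← pow_mul]
      simp only [one_mul, mul_one]
      exact pow_eq_pow_iff_modEq.mpr hs2
  rintro ⟨x, y⟩ hxy
  rw [Subgroup.mem_prod] at hxy
  obtain ⟨k, hk⟩ := Subgroup.mem_zpowers_iff.mp hxy.1
  obtain ⟨l, hl⟩ := Subgroup.mem_zpowers_iff.mp hxy.2
  have : ((x, y) : G₁ × G₂) = ((g₁, 1) : G₁ × G₂) ^ k * ((1, g₂) : G₁ × G₂) ^ l := by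
    simp [Prod.ext_iff, hk, hl]
  rw [this]
  exact mul_mem (zpow_mem h1 k) (zpow_mem h2 l)

omit [Finite G₁] [Finite G₂] in
lemma aux_map_fst_prod (H₁ : Subgroup G₁) (H₂ : Subgroup G₂) :
    (H₁.prod H₂).map (MonoidHom.fst G₁ G₂) = H₁ := by
  ext x
  simp only [Subgroup.mem_map, Subgroup.mem_prod, MonoidHom.coe_fst]
  exact ⟨fun ⟨p, hp, he⟩ => he ▸ hp.1, fun hx => ⟨(x, 1), ⟨hx, one_mem _⟩, rfl⟩⟩

omit [Finite G₁] [Finite G₂] in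
lemma aux_map_snd_prod (H₁ : Subgroup G₁) (H₂ : Subgroup G₂) :
    (H₁.prod H₂).map (MonoidHom.snd G₁ G₂) = H₂ := by
  ext x
  simp only [Subgroup.mem_map, Subgroup.mem_prod, MonoidHom.coe_snd]
  exact ⟨fun ⟨p, hp, he⟩ => he ▸ hp.2, fun hx => ⟨(1, x), ⟨one_mem _, hx⟩, rfl⟩⟩

omit [Finite G₁] [Finite G₂] in
lemma aux_coprime_orders (hco : (Nat.card G₁).Coprime (Nat.card G₂)) (g₁ : G₁) (g₂ : G₂) :
    (orderOf g₁).Coprime (orderOf g₂) :=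
  Nat.Coprime.coprime_dvd_right (orderOf_dvd_natCard g₂)
    (Nat.Coprime.coprime_dvd_left (orderOf_dvd_natCard g₁) hco)

noncomputable def aux_prod_equiv (hco : (Nat.card G₁).Coprime (Nat.card G₂)) :
    {H : Subgroup (G₁ × G₂) // IsCyclic H} ≃
      {H₁ : Subgroup G₁ // IsCyclic H₁} × {H₂ : Subgroup G₂ // IsCyclic H₂} where
  toFun := fun ⟨H, hH⟩ =>
    (⟨H.map (MonoidHom.fst G₁ G₂), by
        haveI := hH
        exact isCyclic_of_surjective _ ((MonoidHom.fst G₁ G₂).subgroupMap_surjective H)⟩,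
     ⟨H.map (MonoidHom.snd G₁ G₂), by
        haveI := hH
        exact isCyclic_of_surjective _ ((MonoidHom.snd G₁ G₂).subgroupMap_surjective H)⟩)
  invFun := fun ⟨⟨H₁, h₁⟩, ⟨H₂, h₂⟩⟩ => ⟨H₁.prod H₂, by
    obtain ⟨g₁, rfl⟩ := aux_exists_zpowers' h₁
    obtain ⟨g₂, rfl⟩ := aux_exists_zpowers' h₂
    rw [← aux_zpowers_prod (aux_coprime_orders hco g₁ g₂)]
    exact auxq_isCyclic_zpowers _⟩
  left_inv := by
    rintro ⟨H, hH⟩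
    obtain ⟨g, rfl⟩ := aux_exists_zpowers' hH
    refine Subtype.ext ?_
    simp only
    rw [MonoidHom.map_zpowers, MonoidHom.map_zpowers, aux_zpowers_prod
      (aux_coprime_orders hco _ _)]
    rfl
  right_inv := by
    rintro ⟨⟨H₁, h₁⟩, ⟨H₂, h₂⟩⟩
    refine Prod.ext (Subtype.ext ?_) (Subtype.ext ?_)
    · exact aux_map_fst_prod H₁ H₂
    · exact aux_map_snd_prod H₁ H₂

end ProdLemma

section Quat

variable {n : ℕ} [NeZero n]

instance : NeZero (2 * n) := ⟨by have := NeZero.pos n; omega⟩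

lemma auxq_a_mem (i : ZMod (2 * n)) :
    (a i : QuaternionGroup n) ∈ Subgroup.zpowers (a 1 : QuaternionGroup n) := by
  refine Subgroup.mem_zpowers_iff.mpr ⟨(i.val : ℤ), ?_⟩
  rw [zpow_natCast, a_one_pow, ZMod.natCast_zmod_val]

lemma auxq_xa_not_mem (i : ZMod (2 * n)) :
    (xa i : QuaternionGroup n) ∉ Subgroup.zpowers (a 1 : QuaternionGroup n) := by
  intro h
  rw [← mem_powers_iff_mem_zpowers] at h
  obtain ⟨k, hk⟩ := h
  dsimp only at hk
  rw [a_one_pow] at hk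
  exact nomatch hk

omit [NeZero n] in
lemma auxq_xa_pow_three (i : ZMod (2 * n)) :
    (xa i : QuaternionGroup n) ^ 3 = xa (i + (n : ZMod (2 * n))) := by
  have h2 : ((2 * n : ℕ) : ZMod (2 * n)) = 0 := ZMod.natCast_self _
  rw [pow_succ, xa_sq, a_mul_xa]
  congr 1
  push_cast at h2
  rw [sub_eq_iff_eq_add]
  linear_combination -h2

lemma auxq_xa_mem_zpowers_xa (i j : ZMod (2 * n)) :
    (xa j : QuaternionGroup n) ∈ Subgroup.zpowers (xa i : QuaternionGroup n) ↔
      j = i ∨ j = i + (n : ZMod (2 * n)) := by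
  constructor
  · intro h
    rw [← mem_powers_iff_mem_zpowers] at h
    obtain ⟨k, hk⟩ := h
    dsimp only at hk
    have h4 : (xa i : QuaternionGroup n) ^ k = (xa i) ^ (k % 4) := by
      rw [pow_inj_mod, orderOf_xa]
      omega
    rw [h4] at hk
    have hlt : k % 4 < 4 := Nat.mod_lt _ (by norm_num)
    interval_cases h : k % 4
    · rw [pow_zero] at hk
      exact absurd hk (by rw [one_def]; exact fun h => nomatch h)
    · rw [pow_one] at hk
      exact Or.inl (QuaternionGroup.xa.inj hk).symm
    · rw [xa_sq] at hk
      exact absurd hk (fun h => nomatch h)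
    · rw [auxq_xa_pow_three] at hk
      exact Or.inr (QuaternionGroup.xa.inj hk).symm
  · rintro (rfl | rfl)
    · exact Subgroup.mem_zpowers _
    · refine Subgroup.mem_zpowers_iff.mpr ⟨3, ?_⟩
      rw [show ((3:ℤ)) = ((3:ℕ):ℤ) by norm_num, zpow_natCast, auxq_xa_pow_three]

lemma auxq_zpowers_xa_add_n (i : ZMod (2 * n)) :
    Subgroup.zpowers (xa (i + (n : ZMod (2 * n))) : QuaternionGroup n) =
      Subgroup.zpowers (xa i : QuaternionGroup n) := by
  apply le_antisymm
  · exact Subgroup.zpowers_le.mpr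
      ((auxq_xa_mem_zpowers_xa i (i + (n : ZMod (2 * n)))).mpr (Or.inr rfl))
  · refine Subgroup.zpowers_le.mpr
      ((auxq_xa_mem_zpowers_xa (i + (n : ZMod (2 * n))) i).mpr (Or.inr ?_))
    rw [add_assoc, ← Nat.cast_add, ← two_mul, ZMod.natCast_self, add_zero]

lemma auxq_count :
    Nat.card {H : Subgroup (QuaternionGroup n) // IsCyclic H} = (2 * n).divisors.card + n := by
  classical
  set Q := QuaternionGroup n
  set A : Subgroup Q := Subgroup.zpowers (a 1 : Q) with hA
  haveI hAcyc : IsCyclic A := auxq_isCyclic_zpowers _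
  have hcardA : Nat.card A = 2 * n := by
    rw [hA, Nat.card_zpowers, orderOf_a_one]
  have cyc_of_le : ∀ H : Subgroup Q, H ≤ A → IsCyclic H := by
    intro H hle
    have : IsCyclic (H.subgroupOf A) := Subgroup.isCyclic _
    exact isCyclic_of_surjective (Subgroup.subgroupOfEquivOfLe hle)
      (Subgroup.subgroupOfEquivOfLe hle).surjective
  have hsplit : Nat.card {H : Subgroup Q // IsCyclic H} =
      Nat.card {x : {H : Subgroup Q // IsCyclic H} // x.1 ≤ A} +
      Nat.card {x : {H : Subgroup Q // IsCyclic H} // ¬ x.1 ≤ A} := by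
    rw [← Nat.card_sum]
    exact Nat.card_congr (Equiv.sumCompl fun x : {H : Subgroup Q // IsCyclic H} => x.1 ≤ A).symm
  rw [hsplit]
  congr 1
  · have e1 : {x : {H : Subgroup Q // IsCyclic H} // x.1 ≤ A} ≃ {H : Subgroup Q // H ≤ A} :=
      { toFun := fun x => ⟨x.1.1, x.2⟩
        invFun := fun H => ⟨⟨H.1, cyc_of_le H.1 H.2⟩, H.2⟩
        left_inv := fun x => rfl
        right_inv := fun H => rfl }
    have e2 : {H : Subgroup Q // H ≤ A} ≃ Subgroup A :=
      { toFun := fun H => H.1.subgroupOf A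
        invFun := fun K => ⟨K.map A.subtype, Subgroup.map_subtype_le K⟩
        left_inv := fun H => Subtype.ext (by
          show ((H.1.subgroupOf A).map A.subtype) = H.1
          rw [Subgroup.subgroupOf_map_subtype, inf_eq_left.mpr H.2])
        right_inv := fun K => by
          show ((K.map A.subtype).subgroupOf A) = K
          rw [← Subgroup.comap_subtype]
          exact Subgroup.comap_map_eq_self_of_injective A.subtype_injective K }
    rw [Nat.card_congr (e1.trans e2), aux_card_subgroup, hcardA]
  · have hbij : Function.Bijective (fun i : ZMod n =>
        (⟨⟨Subgroup.zpowers (xa ((i.val : ℕ) : ZMod (2*n)) : Q), auxq_isCyclic_zpowers _⟩,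
          fun hle => auxq_xa_not_mem _ (hle (Subgroup.mem_zpowers _))⟩ :
          {x : {H : Subgroup Q // IsCyclic H} // ¬ x.1 ≤ A})) := by
      constructor
      · intro i j hij
        have h : Subgroup.zpowers (xa ((i.val : ℕ) : ZMod (2*n)) : Q) =
            Subgroup.zpowers (xa ((j.val : ℕ) : ZMod (2*n)) : Q) :=
          congrArg (fun x => x.1.1) hij
        have hmem : (xa ((j.val : ℕ) : ZMod (2*n)) : Q) ∈
            Subgroup.zpowers (xa ((i.val : ℕ) : ZMod (2*n)) : Q) := by
          rw [h]; exact Subgroup.mem_zpowers _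
        rw [auxq_xa_mem_zpowers_xa] at hmem
        have hiv : i.val < n := ZMod.val_lt i
        have hjv : j.val < n := ZMod.val_lt j
        have hn2 : n < 2 * n := by have := NeZero.pos n; omega
        rcases hmem with h1 | h2
        · have := congrArg ZMod.val h1
          rw [ZMod.val_natCast, ZMod.val_natCast, Nat.mod_eq_of_lt (by omega),
            Nat.mod_eq_of_lt (by omega)] at this
          exact (ZMod.val_injective _ this).symm
        · exfalso
          have h2' : ((j.val : ℕ) : ZMod (2*n)) = ((i.val + n : ℕ) : ZMod (2*n)) := by
            rw [h2]; push_cast; ring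
          have := congrArg ZMod.val h2'
          rw [ZMod.val_natCast, ZMod.val_natCast, Nat.mod_eq_of_lt (by omega),
            Nat.mod_eq_of_lt (by omega)] at this
          omega
      · rintro ⟨⟨H, hcyc⟩, hnle⟩
        obtain ⟨g, rfl⟩ := aux_exists_zpowers' hcyc
        obtain (i | i) := g
        · exact absurd (Subgroup.zpowers_le.mpr (auxq_a_mem i)) hnle
        · have hiv : i.val < 2 * n := ZMod.val_lt i
          by_cases hlt : i.val < n
          · refine ⟨((i.val : ℕ) : ZMod n), ?_⟩
            refine Subtype.ext (Subtype.ext ?_)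
            simp only
            congr 2
            rw [ZMod.val_natCast, Nat.mod_eq_of_lt hlt, ZMod.natCast_zmod_val]
          · refine ⟨((i.val - n : ℕ) : ZMod n), ?_⟩
            refine Subtype.ext (Subtype.ext ?_)
            simp only
            have hval : (((i.val - n : ℕ) : ZMod n)).val = i.val - n := by
              rw [ZMod.val_natCast, Nat.mod_eq_of_lt (by omega)]
            rw [hval]
            have : ((i.val - n : ℕ) : ZMod (2*n)) + (n : ZMod (2*n)) = i := by
              rw [← Nat.cast_add, Nat.sub_add_cancel (by omega), ZMod.natCast_zmod_val]
            calc Subgroup.zpowers (xa ((i.val - n : ℕ) : ZMod (2*n)) : Q)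
                = Subgroup.zpowers
                    (xa (((i.val - n : ℕ) : ZMod (2*n)) + (n : ZMod (2*n))) : Q) :=
                  (auxq_zpowers_xa_add_n _).symm
              _ = Subgroup.zpowers (xa i : Q) := by rw [this]
    rw [← Nat.card_congr (Equiv.ofBijective _ hbij), Nat.card_zmod]

end Quat

/-- For distinct primes `p < q` with `p` odd and `r ≥ 1`, the number of cyclic
subgroups of `T_{4q^r} × C_p` equals `2(q^r + 2(r+1)) = 4q^r p − (2q^r(2p − 1) − 4(r+1))`. -/
theorem num_cyclic_subgroups_dicyclic_q_pow_prod_cyclic (p q r : ℕ) (hp : p.Prime)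
    (hq : q.Prime) (hodd : Odd p) (hpq : p < q) (hr : 1 ≤ r) :
    Nat.card {H : Subgroup (QuaternionGroup (q ^ r) × Multiplicative (ZMod p)) // IsCyclic H} =
      2 * (q ^ r + 2 * (r + 1)) ∧
    Nat.card {H : Subgroup (QuaternionGroup (q ^ r) × Multiplicative (ZMod p)) // IsCyclic H} =
      4 * q ^ r * p - (2 * q ^ r * (2 * p - 1) - 4 * (r + 1)) := by
  haveI : NeZero (q ^ r) := ⟨pow_ne_zero r hq.pos.ne'⟩
  haveI : NeZero p := ⟨hp.pos.ne'⟩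
  have hp3 : 3 ≤ p := by
    obtain ⟨k, hk⟩ := hodd
    have := hp.two_le
    omega
  have hcardQ : Nat.card (QuaternionGroup (q ^ r)) = 4 * q ^ r := by
    rw [Nat.card_eq_fintype_card, QuaternionGroup.card]
  have hcardP : Nat.card (Multiplicative (ZMod p)) = p := by
    rw [Nat.card_congr Multiplicative.toAdd, Nat.card_zmod]
  have hnpdvd : ¬ p ∣ 4 * q ^ r := by
    intro hdvd
    rcases (Nat.Prime.dvd_mul hp).mp hdvd with h4 | hqr
    · have h4' : p ∣ 2 ^ 2 := by rwa [show (2:ℕ) ^ 2 = 4 from rfl]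
      have := (Nat.prime_dvd_prime_iff_eq hp Nat.prime_two).mp (hp.dvd_of_dvd_pow h4')
      omega
    · have : p = q := (Nat.prime_dvd_prime_iff_eq hp hq).mp (hp.dvd_of_dvd_pow hqr)
      omega
  have hco : (Nat.card (QuaternionGroup (q ^ r))).Coprime
      (Nat.card (Multiplicative (ZMod p))) := by
    rw [hcardQ, hcardP]
    exact (Nat.coprime_comm.mp ((Nat.Prime.coprime_iff_not_dvd hp).mpr hnpdvd))
  haveI : IsCyclic (Multiplicative (ZMod p)) := isCyclic_multiplicative
  have hcard2 : Nat.card {H₂ : Subgroup (Multiplicative (ZMod p)) // IsCyclic H₂} = 2 := by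
    have e : {H₂ : Subgroup (Multiplicative (ZMod p)) // IsCyclic H₂} ≃
        Subgroup (Multiplicative (ZMod p)) :=
      Equiv.subtypeUnivEquiv fun H => Subgroup.isCyclic H
    rw [Nat.card_congr e, aux_card_subgroup, hcardP, hp.divisors,
      Finset.card_pair hp.one_lt.ne]
  have hdiv : (2 * q ^ r).divisors.card = 2 * (r + 1) := by
    have hco2 : Nat.Coprime 2 (q ^ r) := by
      refine (Nat.Prime.coprime_iff_not_dvd Nat.prime_two).mpr ?_
      intro h2
      have : 2 = q := (Nat.prime_dvd_prime_iff_eq Nat.prime_two hq).mp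
        (Nat.prime_two.dvd_of_dvd_pow h2)
      omega
    rw [hco2.card_divisors_mul, Nat.divisors_prime_pow hq, Finset.card_map,
      Finset.card_range, Nat.prime_two.divisors, Finset.card_pair (by norm_num)]
  have hmain : Nat.card {H : Subgroup (QuaternionGroup (q ^ r) × Multiplicative (ZMod p)) //
      IsCyclic H} = 2 * (q ^ r + 2 * (r + 1)) := by
    rw [Nat.card_congr (aux_prod_equiv hco), Nat.card_prod, auxq_count, hcard2, hdiv]
    ring
  refine ⟨hmain, ?_⟩
  rw [hmain]
  have h1 : r + 1 ≤ q ^ r := Nat.lt_pow_self (n := r) (by omega)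
  have e2 : 2 * q ^ r * (2 * p - 1) + 2 * q ^ r = 4 * q ^ r * p := by
    have : (2 * p - 1) + 1 = 2 * p := by omega
    calc 2 * q ^ r * (2 * p - 1) + 2 * q ^ r = 2 * q ^ r * ((2 * p - 1) + 1) := by ring
      _ = 4 * q ^ r * p := by rw [this]; ring
  have e3 : 4 * q ^ r ≤ 2 * q ^ r * (2 * p - 1) := by
    calc 4 * q ^ r = 2 * q ^ r * 2 := by ring
      _ ≤ 2 * q ^ r * (2 * p - 1) := Nat.mul_le_mul_left _ (by omega)
  omega
end
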